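/- Theorem 1, tightness: if for every node i ∉ {u,v} one has a u i = 0 or a v i = 0 (i.e., u and v have disjoint neighborhoods), then cost(u,v) = ‖h u − h'_{uv}‖₁ + ‖h v − h'_{uv}‖₁ + ‖x̃_{uv} − x̃ u‖₁ · ∑_{i ∉ {u,v}} a u i / √(d i + c i) + ‖x̃_{uv} − x̃ v‖₁ · ∑_{i ∉ {u,v}} a v i / √(d i + c i). -/
import Mathlib


open Finset

/-- ℓ¹ norm on `Fin f → ℝ`. -/
noncomputable def norm1 {f : ℕ} (w : Fin f → ℝ) : ℝ := ∑ k, |w k|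

/-- Coarse graph convolution representation of node `i`. -/
noncomputable def hrep {V : Type*} [Fintype V] [DecidableEq V] {f : ℕ}
    (x : V → Fin f → ℝ) (a : V → V → ℝ) (c d : V → ℝ) (i : V) : Fin f → ℝ :=
  (c i / (d i + c i)) • x i +
    (1 / Real.sqrt (d i + c i)) •
      ∑ j ∈ ({i} : Finset V)ᶜ, (a j i / Real.sqrt (d j + c j)) • x j

/-- Feature of the supernode obtained by merging `u` and `v`. -/
noncomputable def xmerge {V : Type*} {f : ℕ}
    (x : V → Fin f → ℝ) (c : V → ℝ) (u v : V) : Fin f → ℝ :=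
  (1 / (c u + c v)) • (c u • x u + c v • x v)

/-- Post-merge representation of the supernode `(u,v)`. -/
noncomputable def hmerge {V : Type*} [Fintype V] [DecidableEq V] {f : ℕ}
    (x : V → Fin f → ℝ) (a : V → V → ℝ) (c d : V → ℝ) (u v : V) : Fin f → ℝ :=
  ((c u + c v) / (d u + d v + c u + c v)) • xmerge x c u v +
    (1 / Real.sqrt (d u + d v + c u + c v)) •
      ∑ j ∈ ({u, v} : Finset V)ᶜ, ((a j u + a j v) / Real.sqrt (d j + c j)) • x j

/-- Post-merge representation of a node `i ∉ {u,v}`. -/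
noncomputable def hpost {V : Type*} [Fintype V] [DecidableEq V] {f : ℕ}
    (x : V → Fin f → ℝ) (a : V → V → ℝ) (c d : V → ℝ) (u v i : V) : Fin f → ℝ :=
  (c i / (d i + c i)) • x i +
    (1 / Real.sqrt (d i + c i)) •
      (∑ j ∈ ({u, v, i} : Finset V)ᶜ, (a j i / Real.sqrt (d j + c j)) • x j +
        ((a u i + a v i) / Real.sqrt (d u + d v + c u + c v)) • xmerge x c u v)

/-- The merge cost `cost(u,v)`. -/
noncomputable def mergeCost {V : Type*} [Fintype V] [DecidableEq V] {f : ℕ}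
    (x : V → Fin f → ℝ) (a : V → V → ℝ) (c d : V → ℝ) (u v : V) : ℝ :=
  norm1 (hrep x a c d u - hmerge x a c d u v) +
    norm1 (hrep x a c d v - hmerge x a c d u v) +
    ∑ i ∈ ({u, v} : Finset V)ᶜ, norm1 (hrep x a c d i - hpost x a c d u v i)

/-- Normalized features of node `i`. -/
noncomputable def xtil {V : Type*} {f : ℕ}
    (x : V → Fin f → ℝ) (c d : V → ℝ) (i : V) : Fin f → ℝ :=
  (1 / Real.sqrt (d i + c i)) • x i

/-- Normalized features of the supernode `(u,v)`. -/
noncomputable def xtilMerge {V : Type*} {f : ℕ}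
    (x : V → Fin f → ℝ) (c d : V → ℝ) (u v : V) : Fin f → ℝ :=
  (1 / Real.sqrt (d u + d v + c u + c v)) • xmerge x c u v

/-- Cached sum statistic of node `w`. -/
noncomputable def svec {V : Type*} [Fintype V] [DecidableEq V] {f : ℕ}
    (x : V → Fin f → ℝ) (a : V → V → ℝ) (c d : V → ℝ) (w : V) : Fin f → ℝ :=
  ∑ j ∈ ({w} : Finset V)ᶜ, (a j w / Real.sqrt (d j + c j)) • x j

/-- Influence of node `w`. -/
noncomputable def infl {V : Type*} [Fintype V] [DecidableEq V]
    (a : V → V → ℝ) (c d : V → ℝ) (w : V) : ℝ :=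
  ∑ j ∈ ({w} : Finset V)ᶜ, a w j / Real.sqrt (d j + c j)


lemma norm1_smul {f : ℕ} (t : ℝ) (w : Fin f → ℝ) : norm1 (t • w) = |t| * norm1 w := by
  simp [norm1, Finset.mul_sum, abs_mul]

lemma norm1_neg {f : ℕ} (w : Fin f → ℝ) : norm1 (-w) = norm1 w := by
  simp [norm1]

theorem merge_cost_upper_bound_tight
    {V : Type*} [Fintype V] [DecidableEq V] {f : ℕ}
    (x : V → Fin f → ℝ) (a : V → V → ℝ)
    (hsymm : ∀ i j, a j i = a i j) (hnonneg : ∀ i j, 0 ≤ a i j)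
    (hdiag : ∀ i, a i i = 0)
    (c : V → ℝ) (hc : ∀ i, 1 ≤ c i)
    (d : V → ℝ) (hd : ∀ i, d i = ∑ j, a j i)
    (u v : V) (huv : u ≠ v)
    (hdisj : ∀ i, i ≠ u → i ≠ v → a u i = 0 ∨ a v i = 0) :
    mergeCost x a c d u v =
      norm1 (hrep x a c d u - hmerge x a c d u v) +
        norm1 (hrep x a c d v - hmerge x a c d u v) +
        norm1 (xtilMerge x c d u v - xtil x c d u) *
          ∑ i ∈ ({u, v} : Finset V)ᶜ, a u i / Real.sqrt (d i + c i) +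
        norm1 (xtilMerge x c d u v - xtil x c d v) *
          ∑ i ∈ ({u, v} : Finset V)ᶜ, a v i / Real.sqrt (d i + c i) := by
  
  unfold mergeCost
  have key : ∀ i ∈ ({u, v} : Finset V)ᶜ,
      norm1 (hrep x a c d i - hpost x a c d u v i) =
        norm1 (xtilMerge x c d u v - xtil x c d u) * (a u i / Real.sqrt (d i + c i)) +
        norm1 (xtilMerge x c d u v - xtil x c d v) * (a v i / Real.sqrt (d i + c i)) := by
    intro i hi
    simp only [Finset.mem_compl, Finset.mem_insert, Finset.mem_singleton, not_or] at hi
    obtain ⟨hiu, hiv⟩ := hi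
    have hdiff : hrep x a c d i - hpost x a c d u v i =
        (a u i / Real.sqrt (d i + c i)) • (xtil x c d u - xtilMerge x c d u v) +
        (a v i / Real.sqrt (d i + c i)) • (xtil x c d v - xtilMerge x c d u v) := by
      have hset : ({i} : Finset V)ᶜ = insert u (insert v (({u, v, i} : Finset V)ᶜ)) := by
        ext j
        simp only [Finset.mem_compl, Finset.mem_singleton, Finset.mem_insert, not_or]
        constructor
        · intro h
          by_cases hju : j = u
          · exact Or.inl hju
          by_cases hjv : j = v
          · exact Or.inr (Or.inl hjv)
          · exact Or.inr (Or.inr ⟨hju, hjv, h⟩)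
        · rintro (rfl | rfl | ⟨_, _, h⟩)
          · exact fun h => hiu h.symm
          · exact fun h => hiv h.symm
          · exact h
      have hu1 : u ∉ insert v (({u, v, i} : Finset V)ᶜ) := by
        simp [huv]
      have hv1 : v ∉ (({u, v, i} : Finset V)ᶜ) := by
        simp
      unfold hrep hpost xtil xtilMerge xmerge
      rw [hset, Finset.sum_insert hu1, Finset.sum_insert hv1]
      funext k
      simp only [Pi.add_apply, Pi.sub_apply, Pi.smul_apply, smul_eq_mul]
      ring
    rcases hdisj i hiu hiv with h0 | h0
    · rw [hdiff, h0]
      rw [zero_div, zero_smul, zero_add, norm1_smul,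
        abs_of_nonneg (div_nonneg (hnonneg v i) (Real.sqrt_nonneg _)),
        ← neg_sub (xtilMerge x c d u v), norm1_neg]
      ring
    · rw [hdiff, h0]
      rw [zero_div, zero_smul, add_zero, norm1_smul,
        abs_of_nonneg (div_nonneg (hnonneg u i) (Real.sqrt_nonneg _)),
        ← neg_sub (xtilMerge x c d u v), norm1_neg]
      ring
  rw [Finset.sum_congr rfl key, Finset.sum_add_distrib]
  rw [← Finset.mul_sum, ← Finset.mul_sum]
  ring
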